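/- arXiv:1511.08866 — 3 statements merged into one kernel-verified Lean document; each statement's English description precedes it below -/
import Mathlib

section
/- Let n1, n2, S be positive natural numbers, y = (y_tr, y_te) ∈ ℝ^{n1} × ℝ^{n2}, and for each s ∈ {1,…,S} let P_s be a real n2 × n1 matrix with RSS^{te}(s) := ‖y_te − P_s y_tr‖². Let J be a finite index set and for each j ∈ J let E^{tr}_j := { z ∈ ℝ^{n1} : zᵀ Q_j z + a_jᵀ z + b_j ≥ 0 } for some real n1 × n1 matrix Q_j, vector a_j ∈ ℝ^{n1}, and scalar b_j, and let E_j := { (z, w) ∈ ℝ^{n1} × ℝ^{n2} : z ∈ E^{tr}_j } be its padded version. Fix s. Then [y_tr ∈ ⋂_{j∈J} E^{tr}_j and RSS^{te}(s) ≤ RSS^{te}(r) for all r ∈ {1,…,S}] holds if and only if y ∈ ⋂_{j∈J} E_j ∩ ⋂_{r≠s} E^{te}_r, where E^{te}_r := { (z,w) : [z; w]ᵀ M_r [z; w] ≤ 0 } with M_r the block matrix having upper-left block P_sᵀP_s − P_rᵀP_r, upper-right block −(P_s − P_r)ᵀ, lower-left block −(P_s − P_r), and lower-right block 0. -/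
open Matrix


lemma key_quad {n1 n2 : ℕ} (x : Fin n1 → ℝ) (w : Fin n2 → ℝ)
    (Ps Pr : Matrix (Fin n2) (Fin n1) ℝ) :
    Sum.elim x w ⬝ᵥ
        (Matrix.fromBlocks (Psᵀ * Ps - Prᵀ * Pr) (-(Ps - Pr)ᵀ) (-(Ps - Pr)) 0
          *ᵥ Sum.elim x w) =
      (w - Ps *ᵥ x) ⬝ᵥ (w - Ps *ᵥ x) - (w - Pr *ᵥ x) ⬝ᵥ (w - Pr *ᵥ x) := by
  simp only [fromBlocks_mulVec, sumElim_dotProduct_sumElim, sub_mulVec, neg_mulVec,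
    mulVec_mulVec, dotProduct_sub, sub_dotProduct, dotProduct_neg, neg_dotProduct,
    zero_mulVec, add_zero, Sum.elim_comp_inl, Sum.elim_comp_inr, dotProduct_add, add_dotProduct,
    Matrix.dotProduct_mulVec, vecMul_transpose,
    Matrix.dotProduct_mulVec x Psᵀ, Matrix.dotProduct_mulVec x Prᵀ]
  simp only [← Matrix.dotProduct_mulVec, sub_mulVec, dotProduct_sub, sub_dotProduct,
    dotProduct_comm w (Ps *ᵥ x), dotProduct_comm w (Pr *ᵥ x)]
  simp only [← mulVec_mulVec, Matrix.dotProduct_mulVec, vecMul_transpose]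
  ring

/-- The joint event (training data in all quadratic training regions, and step `s`
minimizes test RSS) holds iff `y = (y_tr, y_te)` lies in the intersection of the padded
training regions `E_j` and the test-error comparison regions `E^te_r`, `r ≠ s`. -/
theorem train_test_selection_event_decomposition
    (n1 n2 S : ℕ) (hn1 : 0 < n1) (hn2 : 0 < n2) (hS : 0 < S)
    (ytr : Fin n1 → ℝ) (yte : Fin n2 → ℝ)
    (P : Fin S → Matrix (Fin n2) (Fin n1) ℝ)
    (J : Type) [Fintype J]
    (Q : J → Matrix (Fin n1) (Fin n1) ℝ) (a : J → Fin n1 → ℝ) (b : J → ℝ)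
    (s : Fin S) :
    ((∀ j : J, ytr ∈ {z : Fin n1 → ℝ | z ⬝ᵥ (Q j *ᵥ z) + a j ⬝ᵥ z + b j ≥ 0}) ∧
        ∀ r : Fin S,
          (yte - P s *ᵥ ytr) ⬝ᵥ (yte - P s *ᵥ ytr) ≤
            (yte - P r *ᵥ ytr) ⬝ᵥ (yte - P r *ᵥ ytr)) ↔
      (ytr, yte) ∈
        (⋂ j : J,
            {p : (Fin n1 → ℝ) × (Fin n2 → ℝ) |
              p.1 ⬝ᵥ (Q j *ᵥ p.1) + a j ⬝ᵥ p.1 + b j ≥ 0}) ∩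
          ⋂ r ∈ {r : Fin S | r ≠ s},
            {p : (Fin n1 → ℝ) × (Fin n2 → ℝ) |
              Sum.elim p.1 p.2 ⬝ᵥ
                  (Matrix.fromBlocks
                      ((P s)ᵀ * P s - (P r)ᵀ * P r) (-(P s - P r)ᵀ)
                      (-(P s - P r)) 0
                    *ᵥ Sum.elim p.1 p.2) ≤ 0} := by
  constructor
  · rintro ⟨h1, h2⟩
    refine ⟨Set.mem_iInter.2 fun j => h1 j, Set.mem_iInter₂.2 fun r hr => ?_⟩
    show Sum.elim ytr yte ⬝ᵥ _ ≤ 0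
    rw [key_quad]
    exact sub_nonpos.2 (h2 r)
  · rintro ⟨h1, h2⟩
    refine ⟨fun j => Set.mem_iInter.1 h1 j, fun r => ?_⟩
    by_cases hrs : r = s
    · subst hrs; exact le_refl _
    · have hm := Set.mem_iInter₂.1 h2 r hrs
      have : Sum.elim ytr yte ⬝ᵥ
          (Matrix.fromBlocks ((P s)ᵀ * P s - (P r)ᵀ * P r) (-(P s - P r)ᵀ)
            (-(P s - P r)) 0 *ᵥ Sum.elim ytr yte) ≤ 0 := hm
      rw [key_quad] at this
      exact sub_nonpos.1 this
end

section
/- Let K ≥ 2, S ≥ 1, and let ℝ^n be decomposed into K fold blocks, with y^f ∈ ℝ^{n_f} the fold-f block of y and y^{-f} the concatenation of the other blocks. For each step s ∈ {1,…,S} and each fold f let P_{f,s} be a real n_f × (n − n_f) matrix, and define RSS(s) := Σ_{f=1}^K ‖y^f − P_{f,s} y^{-f}‖². Let Q^s be the n × n block matrix with Q^s_{ff} := Σ_{g≠f} (P_{g,s})_fᵀ (P_{g,s})_f and, for f ≠ g, Q^s_{fg} := −(P_{f,s})_g − (P_{g,s})_fᵀ + Σ_{h∉{f,g}} (P_{h,s})_fᵀ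 (P_{h,s})_g, and let y_K ∈ ℝ^n denote y reordered by folds. Fix s ∈ {1,…,S}. Then RSS(s) ≤ RSS(r) for all r ∈ {1,…,S} if and only if for every r ≠ s the quadratic inequality y_Kᵀ (Q^s − Q^r) y_K ≤ 0 holds. -/
open Matrix Finset

set_option linter.unusedSectionVars false

section helpers
variable {ι : Type*} [Fintype ι] [DecidableEq ι]

lemma sum_mulVec' {m n : Type*} [Fintype n] (s : Finset ι)
    (M : ι → Matrix m n ℝ) (v : n → ℝ) :
    (∑ i ∈ s, M i) *ᵥ v = ∑ i ∈ s, M i *ᵥ v := by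
  induction s using Finset.cons_induction with
  | empty => simp
  | cons a s ha ih => rw [Finset.sum_cons, Finset.sum_cons, Matrix.add_mulVec, ih]

lemma dot_sum' {n : Type*} [Fintype n] (s : Finset ι)
    (v : n → ℝ) (w : ι → n → ℝ) :
    v ⬝ᵥ (∑ i ∈ s, w i) = ∑ i ∈ s, v ⬝ᵥ w i := by
  induction s using Finset.cons_induction with
  | empty => simp
  | cons a s ha ih => rw [Finset.sum_cons, Finset.sum_cons, dotProduct_add, ih]

lemma sum_dot' {n : Type*} [Fintype n] (s : Finset ι)
    (w : ι → n → ℝ) (v : n → ℝ) :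
    (∑ i ∈ s, w i) ⬝ᵥ v = ∑ i ∈ s, w i ⬝ᵥ v := by
  induction s using Finset.cons_induction with
  | empty => simp
  | cons a s ha ih => rw [Finset.sum_cons, Finset.sum_cons, add_dotProduct, ih]

lemma eraseSum (a : ι) (v : ι → ℝ) :
    ∑ x ∈ univ.erase a, v x = ∑ x, if x ≠ a then v x else 0 := by
  rw [← Finset.filter_ne', Finset.sum_filter]

lemma pair_swap' (T : ι → ι → ℝ) :
    ∑ f, ∑ g ∈ univ.erase f, T f g = ∑ f, ∑ g ∈ univ.erase f, T g f := by
  have conv : ∀ (U : ι → ι → ℝ),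
      ∑ f, ∑ g ∈ univ.erase f, U f g = ∑ f, ∑ g, if g ≠ f then U f g else 0 :=
    fun U => Finset.sum_congr rfl fun f _ => eraseSum f _
  rw [conv, conv, Finset.sum_comm]
  exact Finset.sum_congr rfl fun f _ => Finset.sum_congr rfl fun g _ => by
    by_cases h : f = g <;> simp [h, Ne.symm]

lemma cyc3 (G : ι → ι → ι → ℝ) :
    ∑ f, ∑ g, ∑ h, G f g h = ∑ f, ∑ g, ∑ h, G h f g := by
  rw [Finset.sum_comm]
  exact Finset.sum_congr rfl fun _ _ => Finset.sum_comm

lemma triple_conv (U : ι → ι → ι → ℝ) :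
    ∑ f, ∑ g ∈ univ.erase f, ∑ h ∈ (univ.erase f).erase g, U f g h
      = ∑ f, ∑ g, ∑ h, if g ≠ f ∧ h ≠ f ∧ h ≠ g then U f g h else 0 := by
  have inner : ∀ f g : ι, ∑ h ∈ (univ.erase f).erase g, U f g h
      = ∑ h, if h ≠ f ∧ h ≠ g then U f g h else 0 := by
    intro f g
    rw [← Finset.filter_ne' (univ.erase f) g, Finset.sum_filter, eraseSum]
    refine Finset.sum_congr rfl fun h _ => ?_
    split_ifs <;> first | rfl | tauto
  refine Finset.sum_congr rfl fun f _ => ?_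
  rw [eraseSum f (fun g => ∑ h ∈ (univ.erase f).erase g, U f g h)]
  refine Finset.sum_congr rfl fun g _ => ?_
  by_cases hg : g ≠ f
  · rw [if_pos hg, inner f g]
    refine Finset.sum_congr rfl fun h _ => ?_
    split_ifs <;> first | rfl | tauto
  · rw [if_neg hg]
    exact (Finset.sum_eq_zero fun h _ => if_neg (by tauto)).symm

lemma triple_swap' (T : ι → ι → ι → ℝ) :
    ∑ f, ∑ g ∈ univ.erase f, ∑ h ∈ (univ.erase f).erase g, T f g h
      = ∑ f, ∑ g ∈ univ.erase f, ∑ h ∈ (univ.erase f).erase g, T g h f := by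
  rw [triple_conv, triple_conv,
      cyc3 (fun f g h => if g ≠ f ∧ h ≠ f ∧ h ≠ g then T g h f else 0)]
  refine Finset.sum_congr rfl fun f _ => Finset.sum_congr rfl fun g _ =>
    Finset.sum_congr rfl fun h _ => ?_
  split_ifs <;> first | rfl | tauto

end helpers

/-- Cross-validation selects step `s` (i.e. `RSS(s) ≤ RSS(r)` for all `r`)
iff for every `r ≠ s` the quadratic inequality `y_Kᵀ (Q^s − Q^r) y_K ≤ 0` holds, where
`Q^s` is the block matrix with `Q^s_{ff} = Σ_{g≠f} (P_{g,s})_fᵀ (P_{g,s})_f` and, for `f ≠ g`,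
`Q^s_{fg} = −(P_{f,s})_g − (P_{g,s})_fᵀ + Σ_{h∉{f,g}} (P_{h,s})_fᵀ (P_{h,s})_g`, and `y_K` is
`y` reordered by folds (so the quadratic form is the blockwise double sum). -/
theorem cv_min_iff_quadratic_inequalities
    (K S : ℕ) (hK : 2 ≤ K) (hS : 1 ≤ S) (nf : Fin K → ℕ)
    (y : ∀ f : Fin K, Fin (nf f) → ℝ)
    (P : ∀ (_ : Fin S) (f g : Fin K), Matrix (Fin (nf f)) (Fin (nf g)) ℝ)
    (RSS : Fin S → ℝ)
    (hRSS : ∀ t : Fin S,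
      RSS t = ∑ f : Fin K,
        (y f - ∑ g ∈ Finset.univ.erase f, P t f g *ᵥ y g) ⬝ᵥ
          (y f - ∑ g ∈ Finset.univ.erase f, P t f g *ᵥ y g))
    (Q : ∀ (_ : Fin S) (f g : Fin K), Matrix (Fin (nf f)) (Fin (nf g)) ℝ)
    (hQdiag : ∀ (t : Fin S) (f : Fin K),
      Q t f f = ∑ g ∈ Finset.univ.erase f, (P t g f)ᵀ * P t g f)
    (hQoff : ∀ (t : Fin S) (f g : Fin K), f ≠ g →
      Q t f g = -(P t f g) - (P t g f)ᵀ +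
        ∑ h ∈ (Finset.univ.erase f).erase g, (P t h f)ᵀ * P t h g)
    (s : Fin S) :
    (∀ r : Fin S, RSS s ≤ RSS r) ↔
      ∀ r : Fin S, r ≠ s →
        ∑ f : Fin K, ∑ g : Fin K, y f ⬝ᵥ ((Q s f g - Q r f g) *ᵥ y g) ≤ 0 := by
  have key : ∀ t : Fin S,
      (∑ f : Fin K, ∑ g : Fin K, y f ⬝ᵥ (Q t f g *ᵥ y g))
        = RSS t - ∑ f : Fin K, y f ⬝ᵥ y f := by
    intro t
    have diag : ∀ f : Fin K, y f ⬝ᵥ (Q t f f *ᵥ y f)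
        = ∑ g ∈ univ.erase f, (P t g f *ᵥ y f) ⬝ᵥ (P t g f *ᵥ y f) := by
      intro f
      rw [hQdiag, sum_mulVec', dot_sum']
      refine Finset.sum_congr rfl fun g _ => ?_
      rw [← Matrix.mulVec_mulVec, dotProduct_mulVec, vecMul_transpose]
    have off : ∀ f g : Fin K, g ∈ univ.erase f →
        y f ⬝ᵥ (Q t f g *ᵥ y g)
          = (∑ h ∈ (univ.erase f).erase g, (P t h f *ᵥ y f) ⬝ᵥ (P t h g *ᵥ y g))
            - y f ⬝ᵥ (P t f g *ᵥ y g) - (P t g f *ᵥ y f) ⬝ᵥ y g := by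
      intro f g hg
      have hfg : f ≠ g := fun e => (Finset.mem_erase.mp hg).1 e.symm
      rw [hQoff t f g hfg, Matrix.add_mulVec, Matrix.sub_mulVec, Matrix.neg_mulVec,
        sum_mulVec', dotProduct_add, dotProduct_sub, dotProduct_neg, dot_sum']
      have h1 : y f ⬝ᵥ ((P t g f)ᵀ *ᵥ y g) = (P t g f *ᵥ y f) ⬝ᵥ y g := by
        rw [dotProduct_mulVec, vecMul_transpose]
      have h2 : ∀ h : Fin K, y f ⬝ᵥ (((P t h f)ᵀ * P t h g) *ᵥ y g)
          = (P t h f *ᵥ y f) ⬝ᵥ (P t h g *ᵥ y g) := fun h => by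
        rw [← Matrix.mulVec_mulVec, dotProduct_mulVec, vecMul_transpose]
      simp_rw [h1, h2]; ring
    -- the five scalar sums
    have lhs_eq : (∑ f : Fin K, ∑ g : Fin K, y f ⬝ᵥ (Q t f g *ᵥ y g))
        = (∑ f, ∑ g ∈ univ.erase f, (P t g f *ᵥ y f) ⬝ᵥ (P t g f *ᵥ y f))
          + ((∑ f, ∑ g ∈ univ.erase f, ∑ h ∈ (univ.erase f).erase g,
                (P t h f *ᵥ y f) ⬝ᵥ (P t h g *ᵥ y g))
            - (∑ f, ∑ g ∈ univ.erase f, y f ⬝ᵥ (P t f g *ᵥ y g))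
            - (∑ f, ∑ g ∈ univ.erase f, (P t g f *ᵥ y f) ⬝ᵥ y g)) := by
      calc ∑ f : Fin K, ∑ g : Fin K, y f ⬝ᵥ (Q t f g *ᵥ y g)
          = ∑ f : Fin K, (y f ⬝ᵥ (Q t f f *ᵥ y f)
              + ∑ g ∈ univ.erase f, y f ⬝ᵥ (Q t f g *ᵥ y g)) :=
            Finset.sum_congr rfl fun f _ =>
              (Finset.add_sum_erase univ _ (Finset.mem_univ f)).symm
        _ = ∑ f : Fin K, ((∑ g ∈ univ.erase f, (P t g f *ᵥ y f) ⬝ᵥ (P t g f *ᵥ y f))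
              + ∑ g ∈ univ.erase f,
                ((∑ h ∈ (univ.erase f).erase g, (P t h f *ᵥ y f) ⬝ᵥ (P t h g *ᵥ y g))
                  - y f ⬝ᵥ (P t f g *ᵥ y g) - (P t g f *ᵥ y f) ⬝ᵥ y g)) := by
            refine Finset.sum_congr rfl fun f _ => ?_
            rw [diag f]
            exact congrArg _ (Finset.sum_congr rfl fun g hg => off f g hg)
        _ = _ := by
            rw [Finset.sum_add_distrib]
            congr 1
            simp only [Finset.sum_sub_distrib]
    have rss_eq : RSS t = (∑ f : Fin K, y f ⬝ᵥ y f)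
        - 2 * (∑ f, ∑ g ∈ univ.erase f, y f ⬝ᵥ (P t f g *ᵥ y g))
        + ∑ f, ∑ g ∈ univ.erase f, ∑ h ∈ univ.erase f,
            (P t f g *ᵥ y g) ⬝ᵥ (P t f h *ᵥ y h) := by
      rw [hRSS t]
      have expand : ∀ f : Fin K,
          (y f - ∑ g ∈ univ.erase f, P t f g *ᵥ y g) ⬝ᵥ
            (y f - ∑ g ∈ univ.erase f, P t f g *ᵥ y g)
          = y f ⬝ᵥ y f - 2 * (∑ g ∈ univ.erase f, y f ⬝ᵥ (P t f g *ᵥ y g))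
            + ∑ g ∈ univ.erase f, ∑ h ∈ univ.erase f,
                (P t f g *ᵥ y g) ⬝ᵥ (P t f h *ᵥ y h) := by
        intro f
        rw [dotProduct_sub, sub_dotProduct, sub_dotProduct,
          dotProduct_comm (∑ g ∈ univ.erase f, P t f g *ᵥ y g) (y f),
          dot_sum']
        have haa : (∑ g ∈ univ.erase f, P t f g *ᵥ y g) ⬝ᵥ
            (∑ g ∈ univ.erase f, P t f g *ᵥ y g)
            = ∑ g ∈ univ.erase f, ∑ h ∈ univ.erase f,
                (P t f g *ᵥ y g) ⬝ᵥ (P t f h *ᵥ y h) := by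
          rw [sum_dot']
          exact Finset.sum_congr rfl fun g _ => dot_sum' _ _ _
        rw [haa]; ring
      simp_rw [expand]
      rw [Finset.sum_add_distrib, Finset.sum_sub_distrib, ← Finset.mul_sum]
    have hα : (∑ f, ∑ g ∈ univ.erase f, (P t g f *ᵥ y f) ⬝ᵥ y g)
        = ∑ f, ∑ g ∈ univ.erase f, y f ⬝ᵥ (P t f g *ᵥ y g) := by
      rw [pair_swap' (fun f g => (P t g f *ᵥ y f) ⬝ᵥ y g)]
      exact Finset.sum_congr rfl fun f _ => Finset.sum_congr rfl fun g _ =>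
        dotProduct_comm _ _
    have hA : (∑ f, ∑ g ∈ univ.erase f, ∑ h ∈ univ.erase f,
          (P t f g *ᵥ y g) ⬝ᵥ (P t f h *ᵥ y h))
        = (∑ f, ∑ g ∈ univ.erase f, (P t g f *ᵥ y f) ⬝ᵥ (P t g f *ᵥ y f))
          + ∑ f, ∑ g ∈ univ.erase f, ∑ h ∈ (univ.erase f).erase g,
              (P t h f *ᵥ y f) ⬝ᵥ (P t h g *ᵥ y g) := by
      have split : ∀ f : Fin K, ∀ g ∈ univ.erase f,
          (∑ h ∈ univ.erase f, (P t f g *ᵥ y g) ⬝ᵥ (P t f h *ᵥ y h))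
            = (P t f g *ᵥ y g) ⬝ᵥ (P t f g *ᵥ y g)
              + ∑ h ∈ (univ.erase f).erase g, (P t f g *ᵥ y g) ⬝ᵥ (P t f h *ᵥ y h) :=
        fun f g hg => (Finset.add_sum_erase (univ.erase f) _ hg).symm
      calc ∑ f, ∑ g ∈ univ.erase f, ∑ h ∈ univ.erase f,
            (P t f g *ᵥ y g) ⬝ᵥ (P t f h *ᵥ y h)
          = ∑ f, ∑ g ∈ univ.erase f,
              ((P t f g *ᵥ y g) ⬝ᵥ (P t f g *ᵥ y g)
                + ∑ h ∈ (univ.erase f).erase g, (P t f g *ᵥ y g) ⬝ᵥ (P t f h *ᵥ y h)) :=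
            Finset.sum_congr rfl fun f _ => Finset.sum_congr rfl fun g hg => split f g hg
        _ = (∑ f, ∑ g ∈ univ.erase f, (P t f g *ᵥ y g) ⬝ᵥ (P t f g *ᵥ y g))
            + ∑ f, ∑ g ∈ univ.erase f, ∑ h ∈ (univ.erase f).erase g,
                (P t f g *ᵥ y g) ⬝ᵥ (P t f h *ᵥ y h) := by
            rw [← Finset.sum_add_distrib]
            exact Finset.sum_congr rfl fun f _ => Finset.sum_add_distrib
        _ = _ := by
            rw [pair_swap' (fun f g => (P t f g *ᵥ y g) ⬝ᵥ (P t f g *ᵥ y g)),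
              triple_swap' (fun f g h => (P t f g *ᵥ y g) ⬝ᵥ (P t f h *ᵥ y h)),
              triple_swap' (fun f g h => (P t g h *ᵥ y h) ⬝ᵥ (P t g f *ᵥ y f))]
    linarith [lhs_eq, rss_eq, hα, hA]
  have diffeq : ∀ r : Fin S,
      (∑ f : Fin K, ∑ g : Fin K, y f ⬝ᵥ ((Q s f g - Q r f g) *ᵥ y g))
        = RSS s - RSS r := by
    intro r
    have h : ∀ f g : Fin K, y f ⬝ᵥ ((Q s f g - Q r f g) *ᵥ y g)
        = y f ⬝ᵥ (Q s f g *ᵥ y g) - y f ⬝ᵥ (Q r f g *ᵥ y g) := fun f g => by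
      rw [Matrix.sub_mulVec, dotProduct_sub]
    simp_rw [h, Finset.sum_sub_distrib]
    rw [key s, key r]; ring
  constructor
  · intro h r hr
    rw [diffeq r]
    linarith [h r]
  · intro h r
    by_cases hr : r = s
    · subst hr; exact le_rfl
    · have := h r hr
      rw [diffeq r] at this
      linarith
end

section
/- Let K ≥ 2, S ≥ 1, and let ℝ^n be decomposed into K fold blocks with fold-reordering permutation matrix P (so y_K = P y for all y ∈ ℝ^n). For each fold f, let J_f be a finite index set and for each j ∈ J_f let E^f_j ⊆ ℝ^{n − n_f} be defined by a quadratic inequality { z : zᵀ Q^{(f)}_j z + (a^{(f)}_j)ᵀ z + b^{(f)}_j ≥ 0 }, and let E_{f,j} ⊆ ℝ^n be its padded version { y : y^{-f} ∈ E^f_j }. For each step s ∈ {1,…,S} and each fold f let P_{f,s} be a real n_f × (n − n_f) matrix, set RSS(s) := Σ_f ‖y^f − P_{f,s} y^{-f}‖², and let Q^s be the block matrix with Q^s_{ff} = Σ_{g≠f} (P_{g,s})_fᵀ (P_{g,s})_f and Q^s_{fg} = −(P_{f,s})_g − (P_{g,s})_fᵀ + Σ_{h∉{f,g}} (P_{h,s})_fᵀ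 (P_{h,s})_g for f ≠ g. Fix s. Then [y^{-f} ∈ ⋂_{j∈J_f} E^f_j for every f = 1,…,K, and RSS(s) ≤ RSS(r) for all r ∈ {1,…,S}] holds if and only if y ∈ ⋂_{f=1}^K ⋂_{j∈J_f} E_{f,j} ∩ ⋂_{r≠s} E^{cv}_r, where E^{cv}_r := { z ∈ ℝ^n : zᵀ Pᵀ (Q^r − Q^s) P z ≥ 0 }. -/
open Matrix Finset

private lemma mySumMulVec {ι : Type*} (s : Finset ι) {m k : ℕ}
    (A : ι → Matrix (Fin m) (Fin k) ℝ) (v : Fin k → ℝ) :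
    (∑ i ∈ s, A i) *ᵥ v = ∑ i ∈ s, A i *ᵥ v := by
  ext j
  simp only [mulVec, dotProduct, Matrix.sum_apply, Finset.sum_apply, Finset.sum_mul]
  exact Finset.sum_comm

private lemma myDotSum {ι : Type*} (s : Finset ι) {m : ℕ}
    (v : Fin m → ℝ) (w : ι → Fin m → ℝ) :
    v ⬝ᵥ (∑ i ∈ s, w i) = ∑ i ∈ s, v ⬝ᵥ w i := by
  simp only [dotProduct, Finset.sum_apply, Finset.mul_sum]
  exact Finset.sum_comm

private lemma mySumDot {ι : Type*} (s : Finset ι) {m : ℕ}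
    (w : ι → Fin m → ℝ) (v : Fin m → ℝ) :
    (∑ i ∈ s, w i) ⬝ᵥ v = ∑ i ∈ s, w i ⬝ᵥ v := by
  simp only [dotProduct, Finset.sum_apply, Finset.sum_mul]
  exact Finset.sum_comm

private lemma iteSymm {ι : Type*} [DecidableEq ι] (a b : ι) :
    (if a = b then (0:ℝ) else 1) = if b = a then 0 else 1 := by
  by_cases h : a = b
  · simp [h]
  · simp [h, Ne.symm h]

private lemma eraseToIte {ι : Type*} [DecidableEq ι] (s : Finset ι) (a : ι) (F : ι → ℝ) :
    ∑ x ∈ s.erase a, F x = ∑ x ∈ s, (if x = a then 0 else 1) * F x := by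
  rw [← Finset.filter_ne' s a, Finset.sum_filter]
  refine Finset.sum_congr rfl fun x _ => ?_
  by_cases h : x = a <;> simp [h]

private lemma pairSwap {ι : Type*} [Fintype ι] [DecidableEq ι] (F : ι → ι → ℝ) :
    ∑ f, ∑ g ∈ Finset.univ.erase f, F f g = ∑ f, ∑ g ∈ Finset.univ.erase f, F g f := by
  have h : ∀ (G : ι → ι → ℝ), ∑ f, ∑ g ∈ Finset.univ.erase f, G f g
      = ∑ f : ι, ∑ g : ι, (if g = f then 0 else 1) * G f g :=
    fun G => Finset.sum_congr rfl fun f _ => eraseToIte _ _ _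
  rw [h, h, Finset.sum_comm]
  refine Finset.sum_congr rfl fun f _ => Finset.sum_congr rfl fun g _ => ?_
  rw [iteSymm]

private lemma tripleCyc {ι : Type*} [Fintype ι] [DecidableEq ι] (G : ι → ι → ι → ℝ) :
    ∑ f, ∑ g ∈ Finset.univ.erase f, ∑ h ∈ (Finset.univ.erase f).erase g, G f g h
      = ∑ f, ∑ g ∈ Finset.univ.erase f, ∑ h ∈ (Finset.univ.erase f).erase g, G g h f := by
  have conv : ∀ (W : ι → ι → ι → ℝ),
      ∑ f, ∑ g ∈ Finset.univ.erase f, ∑ h ∈ (Finset.univ.erase f).erase g, W f g h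
      = ∑ f : ι, ∑ g : ι, ∑ h : ι,
          ((if g = f then 0 else 1) * ((if h = f then 0 else 1) * (if h = g then 0 else 1)))
            * W f g h := by
    intro W
    refine Finset.sum_congr rfl fun f _ => ?_
    rw [eraseToIte]
    refine Finset.sum_congr rfl fun g _ => ?_
    rw [eraseToIte (Finset.univ.erase f), eraseToIte]
    rw [Finset.mul_sum]
    refine Finset.sum_congr rfl fun h _ => by ring
  rw [conv, conv]
  have rot : ∀ (T : ι → ι → ι → ℝ),
      ∑ f : ι, ∑ g : ι, ∑ h : ι, T f g h = ∑ h : ι, ∑ f : ι, ∑ g : ι, T f g h := by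
    intro T
    have h1 : ∑ f : ι, ∑ g : ι, ∑ h : ι, T f g h
        = ∑ f : ι, ∑ h : ι, ∑ g : ι, T f g h :=
      Finset.sum_congr rfl fun f _ => Finset.sum_comm
    rw [h1, Finset.sum_comm]
  rw [rot]
  refine Finset.sum_congr rfl fun f _ => Finset.sum_congr rfl fun g _ =>
    Finset.sum_congr rfl fun h _ => ?_
  rw [iteSymm f g, iteSymm f h]
  ring


private lemma cvKey {K S : ℕ} {nf : Fin K → ℕ}
    (y : ∀ f : Fin K, Fin (nf f) → ℝ)
    (P : ∀ (_ : Fin S) (f g : Fin K), Matrix (Fin (nf f)) (Fin (nf g)) ℝ)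
    (RSS : Fin S → ℝ)
    (hRSS : ∀ t : Fin S,
      RSS t = ∑ f : Fin K,
        (y f - ∑ g ∈ Finset.univ.erase f, P t f g *ᵥ y g) ⬝ᵥ
          (y f - ∑ g ∈ Finset.univ.erase f, P t f g *ᵥ y g))
    (Q : ∀ (_ : Fin S) (f g : Fin K), Matrix (Fin (nf f)) (Fin (nf g)) ℝ)
    (hQdiag : ∀ (t : Fin S) (f : Fin K),
      Q t f f = ∑ g ∈ Finset.univ.erase f, (P t g f)ᵀ * P t g f)
    (hQoff : ∀ (t : Fin S) (f g : Fin K), f ≠ g →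
      Q t f g = -(P t f g) - (P t g f)ᵀ +
        ∑ h ∈ (Finset.univ.erase f).erase g, (P t h f)ᵀ * P t h g)
    (t : Fin S) :
    ∑ f : Fin K, ∑ g : Fin K, y f ⬝ᵥ (Q t f g *ᵥ y g)
      = RSS t - ∑ f : Fin K, y f ⬝ᵥ y f := by
  -- expand LHS
  have hdiag : ∀ f : Fin K, y f ⬝ᵥ (Q t f f *ᵥ y f)
      = ∑ g ∈ Finset.univ.erase f, (P t g f *ᵥ y f) ⬝ᵥ (P t g f *ᵥ y f) := by
    intro f
    rw [hQdiag, mySumMulVec, myDotSum]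
    refine Finset.sum_congr rfl fun g _ => ?_
    rw [← mulVec_mulVec, dotProduct_mulVec, vecMul_transpose]
  have hoff : ∀ f : Fin K, ∀ g ∈ Finset.univ.erase f,
      y f ⬝ᵥ (Q t f g *ᵥ y g)
      = -(y f ⬝ᵥ (P t f g *ᵥ y g)) + (-((P t g f *ᵥ y f) ⬝ᵥ y g)
        + ∑ h ∈ (Finset.univ.erase f).erase g, (P t h f *ᵥ y f) ⬝ᵥ (P t h g *ᵥ y g)) := by
    intro f g hg
    have hfg : f ≠ g := fun h => (Finset.mem_erase.mp hg).1 h.symm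
    rw [hQoff t f g hfg, add_mulVec, sub_mulVec, neg_mulVec, mySumMulVec,
      dotProduct_add, dotProduct_sub, dotProduct_neg, myDotSum]
    have h1 : y f ⬝ᵥ ((P t g f)ᵀ *ᵥ y g) = (P t g f *ᵥ y f) ⬝ᵥ y g := by
      rw [dotProduct_mulVec, vecMul_transpose]
    have h2 : ∀ h ∈ (Finset.univ.erase f).erase g,
        y f ⬝ᵥ (((P t h f)ᵀ * P t h g) *ᵥ y g)
        = (P t h f *ᵥ y f) ⬝ᵥ (P t h g *ᵥ y g) := by
      intro h _
      rw [← mulVec_mulVec, dotProduct_mulVec, vecMul_transpose]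
    rw [h1, Finset.sum_congr rfl h2]
    ring
  have hLHS : ∑ f : Fin K, ∑ g : Fin K, y f ⬝ᵥ (Q t f g *ᵥ y g)
      = (∑ f : Fin K, ∑ g ∈ Finset.univ.erase f, (P t g f *ᵥ y f) ⬝ᵥ (P t g f *ᵥ y f))
        + ((∑ f : Fin K, ∑ g ∈ Finset.univ.erase f, -(y f ⬝ᵥ (P t f g *ᵥ y g)))
        + ((∑ f : Fin K, ∑ g ∈ Finset.univ.erase f, -((P t g f *ᵥ y f) ⬝ᵥ y g))
        + (∑ f : Fin K, ∑ g ∈ Finset.univ.erase f, ∑ h ∈ (Finset.univ.erase f).erase g,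
            (P t h f *ᵥ y f) ⬝ᵥ (P t h g *ᵥ y g)))) := by
    have step1 : ∑ f : Fin K, ∑ g : Fin K, y f ⬝ᵥ (Q t f g *ᵥ y g)
        = ∑ f : Fin K, (y f ⬝ᵥ (Q t f f *ᵥ y f)
            + ∑ g ∈ Finset.univ.erase f, y f ⬝ᵥ (Q t f g *ᵥ y g)) :=
      Finset.sum_congr rfl fun f _ =>
        (Finset.add_sum_erase Finset.univ _ (Finset.mem_univ f)).symm
    rw [step1]
    have step2 : ∀ f : Fin K, y f ⬝ᵥ (Q t f f *ᵥ y f)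
        + ∑ g ∈ Finset.univ.erase f, y f ⬝ᵥ (Q t f g *ᵥ y g)
        = (∑ g ∈ Finset.univ.erase f, (P t g f *ᵥ y f) ⬝ᵥ (P t g f *ᵥ y f))
          + ((∑ g ∈ Finset.univ.erase f, -(y f ⬝ᵥ (P t f g *ᵥ y g)))
          + ((∑ g ∈ Finset.univ.erase f, -((P t g f *ᵥ y f) ⬝ᵥ y g))
          + (∑ g ∈ Finset.univ.erase f, ∑ h ∈ (Finset.univ.erase f).erase g,
              (P t h f *ᵥ y f) ⬝ᵥ (P t h g *ᵥ y g)))) := by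
      intro f
      rw [hdiag f, Finset.sum_congr rfl (hoff f)]
      simp only [Finset.sum_add_distrib]
    rw [Finset.sum_congr rfl fun f _ => step2 f]
    simp only [Finset.sum_add_distrib]
  -- expand RHS
  have hterm : ∀ f : Fin K,
      (y f - ∑ g ∈ Finset.univ.erase f, P t f g *ᵥ y g) ⬝ᵥ
        (y f - ∑ g ∈ Finset.univ.erase f, P t f g *ᵥ y g)
      = y f ⬝ᵥ y f
        + ((∑ g ∈ Finset.univ.erase f, (P t f g *ᵥ y g) ⬝ᵥ (P t f g *ᵥ y g))
        + ((∑ g ∈ Finset.univ.erase f, -(y f ⬝ᵥ (P t f g *ᵥ y g)))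
        + ((∑ g ∈ Finset.univ.erase f, -(y f ⬝ᵥ (P t f g *ᵥ y g)))
        + (∑ g ∈ Finset.univ.erase f, ∑ h ∈ (Finset.univ.erase f).erase g,
            (P t f g *ᵥ y g) ⬝ᵥ (P t f h *ᵥ y h))))) := by
    intro f
    set u : Fin (nf f) → ℝ := ∑ g ∈ Finset.univ.erase f, P t f g *ᵥ y g with hu
    have hyu : y f ⬝ᵥ u = ∑ g ∈ Finset.univ.erase f, y f ⬝ᵥ (P t f g *ᵥ y g) :=
      myDotSum _ _ _
    have huy : u ⬝ᵥ y f = y f ⬝ᵥ u := dotProduct_comm _ _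
    have huu : u ⬝ᵥ u = ∑ g ∈ Finset.univ.erase f,
        ((P t f g *ᵥ y g) ⬝ᵥ (P t f g *ᵥ y g)
          + ∑ h ∈ (Finset.univ.erase f).erase g,
              (P t f g *ᵥ y g) ⬝ᵥ (P t f h *ᵥ y h)) := by
      rw [hu, mySumDot]
      refine Finset.sum_congr rfl fun g hg => ?_
      rw [myDotSum]
      exact (Finset.add_sum_erase _ _ hg).symm
    rw [sub_dotProduct, dotProduct_sub, dotProduct_sub, huy, hyu, huu]
    simp only [Finset.sum_add_distrib, Finset.sum_neg_distrib]
    ring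
  rw [hRSS t, Finset.sum_congr rfl fun f _ => hterm f]
  simp only [Finset.sum_add_distrib]
  rw [hLHS]
  -- three symmetry identities
  have hD : (∑ f : Fin K, ∑ g ∈ Finset.univ.erase f, (P t g f *ᵥ y f) ⬝ᵥ (P t g f *ᵥ y f))
      = ∑ f : Fin K, ∑ g ∈ Finset.univ.erase f, (P t f g *ᵥ y g) ⬝ᵥ (P t f g *ᵥ y g) :=
    pairSwap fun f g => (P t g f *ᵥ y f) ⬝ᵥ (P t g f *ᵥ y f)
  have hE : (∑ f : Fin K, ∑ g ∈ Finset.univ.erase f, -((P t g f *ᵥ y f) ⬝ᵥ y g))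
      = ∑ f : Fin K, ∑ g ∈ Finset.univ.erase f, -(y f ⬝ᵥ (P t f g *ᵥ y g)) := by
    rw [pairSwap fun f g => -((P t g f *ᵥ y f) ⬝ᵥ y g)]
    exact Finset.sum_congr rfl fun f _ => Finset.sum_congr rfl fun g _ => by
      rw [dotProduct_comm]
  have hT : (∑ f : Fin K, ∑ g ∈ Finset.univ.erase f, ∑ h ∈ (Finset.univ.erase f).erase g,
        (P t h f *ᵥ y f) ⬝ᵥ (P t h g *ᵥ y g))
      = ∑ f : Fin K, ∑ g ∈ Finset.univ.erase f, ∑ h ∈ (Finset.univ.erase f).erase g,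
        (P t f g *ᵥ y g) ⬝ᵥ (P t f h *ᵥ y h) :=
    tripleCyc fun f g h => (P t h f *ᵥ y f) ⬝ᵥ (P t h g *ᵥ y g)
  rw [hD, hE, hT]
  ring


/-- The full K-fold cross-validation model selection event — each held-out
training response `y^{-f}` lies in all the quadratic training regions `E^f_j`, and step `s`
minimizes the cross-validation RSS — holds iff `y` lies in the intersection of the padded
training regions `E_{f,j}` with the CV comparison regions
`E^cv_r = { z : z_Kᵀ (Q^r − Q^s) z_K ≥ 0 }`, `r ≠ s`. Here the coordinates of `ℝ^n` are
indexed by folds, `y^{-f}` is the subvector indexed by `(g, i)` with `g ≠ f`, and the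
fold-reordered quadratic form `z_Kᵀ M z_K` is written as the blockwise double sum. -/
theorem cv_selection_event_decomposition
    (K S : ℕ) (hK : 2 ≤ K) (hS : 1 ≤ S) (nf : Fin K → ℕ)
    (y : ∀ f : Fin K, Fin (nf f) → ℝ)
    (J : Fin K → Type) [∀ f, Fintype (J f)]
    (Qtr : ∀ f : Fin K, J f →
      Matrix ((g : {g : Fin K // g ≠ f}) × Fin (nf g.1))
        ((g : {g : Fin K // g ≠ f}) × Fin (nf g.1)) ℝ)
    (a : ∀ f : Fin K, J f → ((g : {g : Fin K // g ≠ f}) × Fin (nf g.1)) → ℝ)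
    (b : ∀ f : Fin K, J f → ℝ)
    (P : ∀ (_ : Fin S) (f g : Fin K), Matrix (Fin (nf f)) (Fin (nf g)) ℝ)
    (RSS : Fin S → ℝ)
    (hRSS : ∀ t : Fin S,
      RSS t = ∑ f : Fin K,
        (y f - ∑ g ∈ Finset.univ.erase f, P t f g *ᵥ y g) ⬝ᵥ
          (y f - ∑ g ∈ Finset.univ.erase f, P t f g *ᵥ y g))
    (Q : ∀ (_ : Fin S) (f g : Fin K), Matrix (Fin (nf f)) (Fin (nf g)) ℝ)
    (hQdiag : ∀ (t : Fin S) (f : Fin K),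
      Q t f f = ∑ g ∈ Finset.univ.erase f, (P t g f)ᵀ * P t g f)
    (hQoff : ∀ (t : Fin S) (f g : Fin K), f ≠ g →
      Q t f g = -(P t f g) - (P t g f)ᵀ +
        ∑ h ∈ (Finset.univ.erase f).erase g, (P t h f)ᵀ * P t h g)
    (s : Fin S) :
    ((∀ (f : Fin K) (j : J f),
        (fun p : (g : {g : Fin K // g ≠ f}) × Fin (nf g.1) => y p.1.1 p.2) ∈
          {z : ((g : {g : Fin K // g ≠ f}) × Fin (nf g.1)) → ℝ |
            z ⬝ᵥ (Qtr f j *ᵥ z) + a f j ⬝ᵥ z + b f j ≥ 0}) ∧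
      ∀ r : Fin S, RSS s ≤ RSS r) ↔
    y ∈
      (⋂ (f : Fin K), ⋂ (j : J f),
          {z : ∀ f' : Fin K, Fin (nf f') → ℝ |
            (fun p : (g : {g : Fin K // g ≠ f}) × Fin (nf g.1) => z p.1.1 p.2) ⬝ᵥ
                (Qtr f j *ᵥ
                  fun p : (g : {g : Fin K // g ≠ f}) × Fin (nf g.1) => z p.1.1 p.2) +
              a f j ⬝ᵥ
                (fun p : (g : {g : Fin K // g ≠ f}) × Fin (nf g.1) => z p.1.1 p.2) +
              b f j ≥ 0}) ∩
        ⋂ r ∈ {r : Fin S | r ≠ s},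
          {z : ∀ f' : Fin K, Fin (nf f') → ℝ |
            ∑ f : Fin K, ∑ g : Fin K, z f ⬝ᵥ ((Q r f g - Q s f g) *ᵥ z g) ≥ 0} := by
  have key : ∀ t : Fin S, ∑ f : Fin K, ∑ g : Fin K, y f ⬝ᵥ (Q t f g *ᵥ y g)
      = RSS t - ∑ f : Fin K, y f ⬝ᵥ y f :=
    fun t => cvKey y P RSS hRSS Q hQdiag hQoff t
  have hdiff : ∀ r : Fin S,
      ∑ f : Fin K, ∑ g : Fin K, y f ⬝ᵥ ((Q r f g - Q s f g) *ᵥ y g) = RSS r - RSS s := by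
    intro r
    have hsub : ∀ f g : Fin K, y f ⬝ᵥ ((Q r f g - Q s f g) *ᵥ y g)
        = y f ⬝ᵥ (Q r f g *ᵥ y g) - y f ⬝ᵥ (Q s f g *ᵥ y g) := fun f g => by
      rw [sub_mulVec, dotProduct_sub]
    simp only [hsub, Finset.sum_sub_distrib, key r, key s]
    ring
  simp only [Set.mem_inter_iff, Set.mem_iInter, Set.mem_setOf_eq, ge_iff_le]
  constructor
  · rintro ⟨h1, h2⟩
    refine ⟨h1, fun r _ => ?_⟩
    rw [hdiff r]
    linarith [h2 r]
  · rintro ⟨h1, h2⟩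
    refine ⟨h1, fun r => ?_⟩
    by_cases hr : r = s
    · exact hr ▸ le_refl _
    · have := h2 r hr
      rw [hdiff r] at this
      linarith
end
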